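/- Let P_n denote the n-th Legendre polynomial, given by P_n(x) := 2^{−n} ∑_{k=0}^n C(n,k)² (x+1)^k (x−1)^{n−k}. Then for every n ≥ 1 and every real y > 1, P_n(y) ≤ (y + √(y²−1))·P_{n−1}(y). -/

import Mathlib

/-!
Substituting `x + 1 = p²`, `x - 1 = q²` turns `2ⁿ P_n(x)` into the sum of the squares of the
terms `C(n,k) pᵏ qⁿ⁻ᵏ` of the binomial expansion of `(p + q)ⁿ`, i.e. the squared ℓ²-norm of the
coefficient vector of `(pX + q)ⁿ`. Multiplying a polynomial by `pX + q` scales that norm by at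
most `p + q` (triangle inequality, multiplication by `X` being an isometry), and
`(p + q)² = 2 (x + √(x² - 1))`.
-/

/-- The `n`-th Legendre polynomial, by the explicit formula
`P_n(x) = 2^(-n) ∑_{k=0}^n C(n,k)² (x+1)^k (x-1)^(n-k)`. -/
noncomputable def legendreP (n : ℕ) (x : ℝ) : ℝ :=
  (1 / 2 ^ n) * ∑ k ∈ Finset.range (n + 1),
    (n.choose k : ℝ) ^ 2 * (x + 1) ^ k * (x - 1) ^ (n - k)

open Finset

theorem sum_mul_succ_le_sum_sq (b : ℕ → ℝ) (n : ℕ) :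
    ∑ k ∈ range n, b k * b (k + 1) ≤ ∑ k ∈ range (n + 1), b k ^ 2 := by
  have hAMGM : ∑ k ∈ range n, 2 * (b k * b (k + 1)) ≤ ∑ k ∈ range n, (b k ^ 2 + b (k + 1) ^ 2) :=
    sum_le_sum fun k _ => by rw [← mul_assoc]; exact two_mul_le_add_sq _ _
  rw [sum_add_distrib, ← mul_sum] at hAMGM
  have hlast := sum_range_succ (fun k => b k ^ 2) n
  have hfirst := sum_range_succ' (fun k => b k ^ 2) n
  nlinarith [sq_nonneg (b n), sq_nonneg (b 0)]

/-- The left side is the squared ℓ²-norm of the coefficients of `(pX + q) ∑ₖ bₖ Xᵏ` (`k ≤ n`),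
with the top coefficient `p bₙ` dropped. -/
theorem sq_add_sum_sq_mul_add_mul_succ_le (b : ℕ → ℝ) (n : ℕ) {p q : ℝ} (hp : 0 ≤ p)
    (hq : 0 ≤ q) :
    (q * b 0) ^ 2 + ∑ k ∈ range n, (p * b k + q * b (k + 1)) ^ 2 ≤
      (p + q) ^ 2 * ∑ k ∈ range (n + 1), b k ^ 2 := by
  have hexpand : ∀ k, (p * b k + q * b (k + 1)) ^ 2 =
      p ^ 2 * b k ^ 2 + q ^ 2 * b (k + 1) ^ 2 + 2 * p * q * (b k * b (k + 1)) :=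
    fun k => by ring
  simp only [hexpand, sum_add_distrib, ← mul_sum]
  have hshift := sum_range_succ' (fun k => b k ^ 2) n
  have hinit : ∑ k ∈ range n, b k ^ 2 ≤ ∑ k ∈ range (n + 1), b k ^ 2 := by
    rw [sum_range_succ]; linarith [sq_nonneg (b n)]
  have hcross := mul_le_mul_of_nonneg_left (sum_mul_succ_le_sum_sq b n)
    (by positivity : 0 ≤ 2 * p * q)
  nlinarith [mul_le_mul_of_nonneg_left hinit (sq_nonneg p)]

noncomputable def binomTerm (n : ℕ) (p q : ℝ) (k : ℕ) : ℝ :=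
  n.choose k * p ^ k * q ^ (n - k)

theorem binomTerm_succ_zero (n : ℕ) (p q : ℝ) :
    binomTerm (n + 1) p q 0 = q * binomTerm n p q 0 := by
  simp [binomTerm, pow_succ']

theorem binomTerm_succ_succ (n : ℕ) (p q : ℝ) (k : ℕ) :
    binomTerm (n + 1) p q (k + 1) = p * binomTerm n p q k + q * binomTerm n p q (k + 1) := by
  rcases lt_or_ge n (k + 1) with hnk | hkn
  · simp only [binomTerm, Nat.choose_succ_succ, Nat.choose_eq_zero_of_lt hnk, pow_succ,
      Nat.sub_eq_zero_of_le (Nat.le_of_lt_succ hnk), Nat.reduceSubDiff, add_zero, pow_zero,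
      mul_one, Nat.cast_zero, zero_mul, mul_zero]
    ring
  · obtain ⟨j, rfl⟩ := Nat.exists_eq_add_of_le hkn
    simp only [binomTerm, Nat.choose_succ_succ, Nat.cast_add, show k + 1 + j - k = j + 1 by omega,
      show k + 1 + j + 1 - (k + 1) = j + 1 by omega, show k + 1 + j - (k + 1) = j by omega]
    ring

theorem binomTerm_of_lt (n : ℕ) (p q : ℝ) {k : ℕ} (hk : n < k) : binomTerm n p q k = 0 := by
  simp [binomTerm, Nat.choose_eq_zero_of_lt hk]

theorem sum_sq_binomTerm_succ_le (n : ℕ) {p q : ℝ} (hp : 0 ≤ p) (hq : 0 ≤ q) :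
    ∑ k ∈ range (n + 2), binomTerm (n + 1) p q k ^ 2 ≤
      (p + q) ^ 2 * ∑ k ∈ range (n + 1), binomTerm n p q k ^ 2 := by
  calc ∑ k ∈ range (n + 2), binomTerm (n + 1) p q k ^ 2
      = (q * binomTerm n p q 0) ^ 2 +
          ∑ k ∈ range (n + 1), (p * binomTerm n p q k + q * binomTerm n p q (k + 1)) ^ 2 := by
        rw [sum_range_succ', add_comm]
        simp only [binomTerm_succ_zero, binomTerm_succ_succ]
    _ ≤ (p + q) ^ 2 * ∑ k ∈ range (n + 2), binomTerm n p q k ^ 2 :=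
        sq_add_sum_sq_mul_add_mul_succ_le _ _ hp hq
    _ = (p + q) ^ 2 * ∑ k ∈ range (n + 1), binomTerm n p q k ^ 2 := by
        rw [sum_range_succ _ (n + 1), binomTerm_of_lt n p q (Nat.lt_succ_self n)]
        ring

theorem legendreP_eq_sum_sq_binomTerm (n : ℕ) {x : ℝ} (hx : 1 ≤ x) :
    legendreP n x =
      1 / 2 ^ n * ∑ k ∈ range (n + 1), binomTerm n √(x + 1) √(x - 1) k ^ 2 := by
  unfold legendreP binomTerm
  congr 1
  refine sum_congr rfl fun k _ => ?_
  rw [mul_pow, mul_pow, ← pow_mul, ← pow_mul, mul_comm k, mul_comm (n - k), pow_mul, pow_mul,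
    Real.sq_sqrt (by linarith), Real.sq_sqrt (by linarith)]

theorem legendre_ratio_bound (n : ℕ) (hn : 1 ≤ n) (y : ℝ) (hy : 1 < y) :
    legendreP n y ≤ (y + Real.sqrt (y ^ 2 - 1)) * legendreP (n - 1) y := by
  obtain ⟨m, rfl⟩ := Nat.exists_eq_add_of_le' hn
  have hsq : (√(y + 1) + √(y - 1)) ^ 2 = 2 * (y + √(y ^ 2 - 1)) := by
    rw [add_sq, Real.sq_sqrt (by linarith), Real.sq_sqrt (by linarith), mul_assoc,
      ← Real.sqrt_mul (by linarith)]
    ring_nf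
  have hstep := sum_sq_binomTerm_succ_le m (Real.sqrt_nonneg (y + 1)) (Real.sqrt_nonneg (y - 1))
  rw [hsq] at hstep
  rw [Nat.add_sub_cancel, legendreP_eq_sum_sq_binomTerm _ hy.le,
    legendreP_eq_sum_sq_binomTerm _ hy.le]
  calc _ ≤ 1 / 2 ^ (m + 1) * (2 * (y + √(y ^ 2 - 1)) *
          ∑ k ∈ range (m + 1), binomTerm m √(y + 1) √(y - 1) k ^ 2) :=
        mul_le_mul_of_nonneg_left hstep (by positivity)
    _ = _ := by rw [pow_succ]; field_simp
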